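/- arXiv:2201.02809 — 16 statements merged into one kernel-verified Lean document; each statement's English description precedes it below -/
import Mathlib

section
/- In ℤ[X] one has the factorization X^5 + 50X^4 + 722X^3 + 3820X^2 + 4416X − 11520 = (X + 8)^2 (X + 30)(X^2 + 4X − 6); consequently the unique positive real root of x^5 + 50x^4 + 722x^3 + 3820x^2 + 4416x − 11520 is √10 − 2. -/
open Polynomial

theorem stmt_1 :
    ((X^5 + 50*X^4 + 722*X^3 + 3820*X^2 + 4416*X - 11520 : ℤ[X]) =
      (X + 8)^2 * (X + 30) * (X^2 + 4*X - 6)) ∧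
    (0 < Real.sqrt 10 - 2 ∧
      (Real.sqrt 10 - 2)^5 + 50*(Real.sqrt 10 - 2)^4 + 722*(Real.sqrt 10 - 2)^3
        + 3820*(Real.sqrt 10 - 2)^2 + 4416*(Real.sqrt 10 - 2) - 11520 = 0) ∧
    (∀ x : ℝ, 0 < x →
      x^5 + 50*x^4 + 722*x^3 + 3820*x^2 + 4416*x - 11520 = 0 →
      x = Real.sqrt 10 - 2) := by
  have hs : Real.sqrt 10 ^ 2 = 10 := Real.sq_sqrt (by norm_num)
  have hs3 : (3 : ℝ) < Real.sqrt 10 := by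
    have := Real.lt_sqrt (x := 3) (y := 10) (by norm_num)
    exact this.mpr (by norm_num)
  refine ⟨by ring, ⟨by linarith, ?_⟩, ?_⟩
  · linear_combination (Real.sqrt 10 ^ 3 + 40 * Real.sqrt 10 ^ 2 + 372 * Real.sqrt 10 + 1008) * hs
  · intro x hx hroot
    have hfac : (x+8)^2 * (x+30) * (x^2 + 4*x - 6) = 0 := by nlinarith [hroot]
    have h1 : (x+8)^2 * (x+30) > 0 := by positivity
    have h2 : x^2 + 4*x - 6 = 0 := by
      rcases mul_eq_zero.mp hfac with h | h
      · exact absurd h (ne_of_gt h1)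
      · exact h
    have h3 : (x + 2 - Real.sqrt 10) * (x + 2 + Real.sqrt 10) = 0 := by
      linear_combination h2 - hs
    rcases mul_eq_zero.mp h3 with h | h
    · linarith
    · linarith
end

section
/- In ℤ[X] one has the factorization X^5 + 2X^4 − 71X^3 + 78X^2 − 75X + 450 = (X + 10)(X^2 + X + 3)(X^2 − 9X + 15); the set of positive real roots of x^5 + 2x^4 − 71x^3 + 78x^2 − 75x + 450 is exactly {(9 − √21)/2, (9 + √21)/2}, and the sum of these two roots is 9. Moreover 9·√(5 + 2√2) = √(405 + √52488). -/
open Polynomial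

theorem stmt_2 :
    ((X^5 + 2*X^4 - 71*X^3 + 78*X^2 - 75*X + 450 : ℤ[X]) =
      (X + 10) * (X^2 + X + 3) * (X^2 - 9*X + 15)) ∧
    ({x : ℝ | 0 < x ∧ x^5 + 2*x^4 - 71*x^3 + 78*x^2 - 75*x + 450 = 0} =
      {(9 - Real.sqrt 21)/2, (9 + Real.sqrt 21)/2}) ∧
    ((9 - Real.sqrt 21)/2 + (9 + Real.sqrt 21)/2 = 9) ∧
    (9 * Real.sqrt (5 + 2*Real.sqrt 2) = Real.sqrt (405 + Real.sqrt 52488)) := by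
  have hs21 : Real.sqrt 21 ^ 2 = 21 := Real.sq_sqrt (by norm_num)
  have hs21nn : (0:ℝ) ≤ Real.sqrt 21 := Real.sqrt_nonneg 21
  have hs21lt : Real.sqrt 21 < 5 := by
    nlinarith [hs21, hs21nn]
  refine ⟨by ring, ?_, by ring, ?_⟩
  · ext x
    simp only [Set.mem_setOf_eq, Set.mem_insert_iff, Set.mem_singleton_iff]
    constructor
    · rintro ⟨hx, heq⟩
      have h2 : (0:ℝ) < x^2 + x + 3 := by nlinarith [sq_nonneg x]
      have h1 : (0:ℝ) < x + 10 := by linarith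
      have h3 : x^2 - 9*x + 15 = 0 := by
        rcases mul_eq_zero.1 (show (x + 10) * (x^2 + x + 3) * (x^2 - 9*x + 15) = 0 by
          nlinarith [heq]) with h | h
        · exact absurd h (by positivity)
        · exact h
      have hfac2 : (2*x - 9 - Real.sqrt 21) * (2*x - 9 + Real.sqrt 21) = 0 := by
        nlinarith [hs21]
      rcases mul_eq_zero.1 hfac2 with h | h
      · right; linarith
      · left; linarith
    · have key : ∀ y : ℝ, y^2 - 9*y + 15 = 0 → y^5 + 2*y^4 - 71*y^3 + 78*y^2 - 75*y + 450 = 0 := by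
        intro y hy
        linear_combination (y^3 + 11*y^2 + 13*y + 30) * hy
      rintro (h | h) <;> subst h <;>
        exact ⟨by nlinarith, key _ (by linear_combination (1/4 : ℝ) * hs21)⟩
  · have hs2 : Real.sqrt 2 ^ 2 = 2 := Real.sq_sqrt (by norm_num)
    have hs2nn : (0:ℝ) ≤ Real.sqrt 2 := Real.sqrt_nonneg 2
    have h1 : Real.sqrt 52488 = 162 * Real.sqrt 2 := by
      rw [show (52488:ℝ) = 162^2 * 2 by norm_num, Real.sqrt_mul (by positivity),
        Real.sqrt_sq (by norm_num)]
    rw [h1, show (405:ℝ) + 162 * Real.sqrt 2 = 81 * (5 + 2*Real.sqrt 2) by ring,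
      Real.sqrt_mul (by norm_num), show Real.sqrt 81 = 9 by
        rw [show (81:ℝ) = 9^2 by norm_num, Real.sqrt_sq] ; norm_num]
end

section
/- In ℤ[X] one has the factorization X^5 − 8X^4 − 20X^3 + 416X^2 − 2700X + 7072 = (X + 8)(X^2 − 4X + 26)(X^2 − 12X + 34); the set of positive real roots of x^5 − 8x^4 − 20x^3 + 416x^2 − 2700x + 7072 is exactly {6 − √2, 6 + √2}, and (6 − √2)/2 = 3 − √(1/2). -/
open Polynomial

theorem stmt_3 :
    ((X^5 - 8*X^4 - 20*X^3 + 416*X^2 - 2700*X + 7072 : ℤ[X]) =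
      (X + 8) * (X^2 - 4*X + 26) * (X^2 - 12*X + 34)) ∧
    ({x : ℝ | 0 < x ∧ x^5 - 8*x^4 - 20*x^3 + 416*x^2 - 2700*x + 7072 = 0} =
      {6 - Real.sqrt 2, 6 + Real.sqrt 2}) ∧
    ((6 - Real.sqrt 2)/2 = 3 - Real.sqrt (1/2)) := by
  have hs2 : Real.sqrt 2 ^ 2 = 2 := Real.sq_sqrt (by norm_num)
  have hs1 : (1:ℝ) < Real.sqrt 2 := by
    nlinarith [Real.sqrt_nonneg 2]
  have hs3 : Real.sqrt 2 < 2 := by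
    nlinarith [Real.sqrt_nonneg 2]
  refine ⟨by ring, ?_, ?_⟩
  · ext x
    simp only [Set.mem_setOf_eq, Set.mem_insert_iff, Set.mem_singleton_iff]
    constructor
    · rintro ⟨hx, heq⟩
      have hfac : (x + 8) * ((x - 2)^2 + 22) * ((x - 6)^2 - 2) = 0 := by
        nlinarith [heq]
      have h1 : (x + 8) ≠ 0 := by positivity
      have h2 : ((x - 2)^2 + 22) ≠ 0 := by positivity
      have h3 : (x - 6)^2 = 2 := by
        rcases mul_eq_zero.mp hfac with h | h
        · rcases mul_eq_zero.mp h with h | h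
          · exact absurd h h1
          · exact absurd h h2
        · linarith
      have h4 : (x - 6 - Real.sqrt 2) * (x - 6 + Real.sqrt 2) = 0 := by
        nlinarith
      rcases mul_eq_zero.mp h4 with h | h
      · right; linarith
      · left; linarith
    · rintro (rfl | rfl)
      · refine ⟨by linarith, ?_⟩
        linear_combination ((6 - Real.sqrt 2 + 8) * ((6 - Real.sqrt 2)^2 - 4*(6 - Real.sqrt 2) + 26)) * hs2
      · refine ⟨by linarith, ?_⟩
        linear_combination ((6 + Real.sqrt 2 + 8) * ((6 + Real.sqrt 2)^2 - 4*(6 + Real.sqrt 2) + 26)) * hs2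
  · have : Real.sqrt (1/2) = (Real.sqrt 2)⁻¹ := by
      rw [one_div, Real.sqrt_inv]
    rw [this]
    have h0 : Real.sqrt 2 ≠ 0 := by positivity
    field_simp
    nlinarith
end

section
/- In ℤ[X] one has the factorization X^5 − 9X^4 − 4X^3 + 308X^2 − 2252X + 6188 = (X + 7)(X^2 − 4X + 26)(X^2 − 12X + 34); the set of positive real roots of x^5 − 9x^4 − 4x^3 + 308x^2 − 2252x + 6188 is exactly {6 − √2, 6 + √2}, whose sum is 12. Moreover 12·√((29 + 9√5)/2) = √(2088 + √2099520). -/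
open Polynomial

theorem stmt_4 :
    ((X^5 - 9*X^4 - 4*X^3 + 308*X^2 - 2252*X + 6188 : ℤ[X]) =
      (X + 7) * (X^2 - 4*X + 26) * (X^2 - 12*X + 34)) ∧
    ({x : ℝ | 0 < x ∧ x^5 - 9*x^4 - 4*x^3 + 308*x^2 - 2252*x + 6188 = 0} =
      {6 - Real.sqrt 2, 6 + Real.sqrt 2}) ∧
    ((6 - Real.sqrt 2) + (6 + Real.sqrt 2) = 12) ∧
    (12 * Real.sqrt ((29 + 9*Real.sqrt 5)/2) = Real.sqrt (2088 + Real.sqrt 2099520)) := by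
  have s2 : Real.sqrt 2 ^ 2 = 2 := Real.sq_sqrt (by norm_num)
  have s2pos : (0:ℝ) < Real.sqrt 2 := Real.sqrt_pos.mpr (by norm_num)
  have s2lt : Real.sqrt 2 < 2 := by
    nlinarith [s2, s2pos]
  refine ⟨by ring, ?_, by ring, ?_⟩
  · ext x
    simp only [Set.mem_setOf_eq, Set.mem_insert_iff, Set.mem_singleton_iff]
    constructor
    · rintro ⟨hx, heq⟩
      have hfac : (x + 7) * ((x-2)^2 + 22) * ((x-6)^2 - 2) = 0 := by nlinarith [heq]
      have h1 : x + 7 > 0 := by linarith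
      have h2 : (x-2)^2 + 22 > 0 := by positivity
      have h3 : (x-6)^2 - 2 = 0 := by
        rcases mul_eq_zero.mp hfac with h | h
        · rcases mul_eq_zero.mp h with h | h <;> nlinarith
        · exact h
      have h4 : (x - 6)^2 = Real.sqrt 2 ^ 2 := by rw [s2]; linarith
      rcases sq_eq_sq_iff_eq_or_eq_neg.mp h4 with h | h
      · right; linarith
      · left; linarith
    · rintro (h | h) <;> subst h
      · exact ⟨by linarith, by
          linear_combination (-Real.sqrt 2^3 + 21*Real.sqrt 2^2 - 142*Real.sqrt 2 + 494) * s2⟩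
      · exact ⟨by linarith, by
          linear_combination (Real.sqrt 2^3 + 21*Real.sqrt 2^2 + 142*Real.sqrt 2 + 494) * s2⟩
  · have s5 : Real.sqrt 5 ^ 2 = 5 := Real.sq_sqrt (by norm_num)
    have s5pos : (0:ℝ) ≤ Real.sqrt 5 := Real.sqrt_nonneg 5
    have h648 : Real.sqrt 2099520 = 648 * Real.sqrt 5 := by
      rw [show (2099520:ℝ) = 648^2 * 5 by norm_num, Real.sqrt_mul (by positivity),
        Real.sqrt_sq (by norm_num)]
    rw [h648]
    rw [show (12:ℝ) * Real.sqrt ((29 + 9*Real.sqrt 5)/2)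
        = Real.sqrt (144 * ((29 + 9*Real.sqrt 5)/2)) by
      rw [Real.sqrt_mul (by norm_num), show (144:ℝ) = 12^2 by norm_num,
        Real.sqrt_sq (by norm_num)]]
    congr 1
    ring
end

section
/- In ℤ[X] one has the factorization X^5 − X^4 − 132X^3 + 1172X^2 − 5836X + 13260 = (X + 15)(X^2 − 4X + 26)(X^2 − 12X + 34); the set of positive real roots of x^5 − x^4 − 132x^3 + 1172x^2 − 5836x + 13260 is exactly {6 − √2, 6 + √2}, whose difference is 2√2. Moreover (1 + √5)·√(5 − √5) = √(20 + √80). -/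
open Polynomial

theorem stmt_5 :
    ((X^5 - X^4 - 132*X^3 + 1172*X^2 - 5836*X + 13260 : ℤ[X]) =
      (X + 15) * (X^2 - 4*X + 26) * (X^2 - 12*X + 34)) ∧
    ({x : ℝ | 0 < x ∧ x^5 - x^4 - 132*x^3 + 1172*x^2 - 5836*x + 13260 = 0} =
      {6 - Real.sqrt 2, 6 + Real.sqrt 2}) ∧
    ((6 + Real.sqrt 2) - (6 - Real.sqrt 2) = 2 * Real.sqrt 2) ∧
    ((1 + Real.sqrt 5) * Real.sqrt (5 - Real.sqrt 5) =
      Real.sqrt (20 + Real.sqrt 80)) := by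
  have hs2 : Real.sqrt 2 ^ 2 = 2 := Real.sq_sqrt (by norm_num)
  have hs2lt : Real.sqrt 2 < 2 := by
    nlinarith [Real.sqrt_nonneg 2, hs2]
  have hs2pos : 0 < Real.sqrt 2 := Real.sqrt_pos.mpr (by norm_num)
  have key : ∀ x : ℝ, x^5 - x^4 - 132*x^3 + 1172*x^2 - 5836*x + 13260 =
      (x + 15) * ((x - 2)^2 + 22) *
        ((x - (6 - Real.sqrt 2)) * (x - (6 + Real.sqrt 2))) := by
    intro x
    linear_combination ((x + 15) * ((x - 2)^2 + 22)) * hs2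
  refine ⟨by ring, ?_, by ring, ?_⟩
  · ext x
    simp only [Set.mem_setOf_eq, Set.mem_insert_iff, Set.mem_singleton_iff]
    constructor
    · rintro ⟨hx, hp⟩
      rw [key x] at hp
      have h1 : (0:ℝ) < x + 15 := by linarith
      have h2 : (0:ℝ) < (x - 2)^2 + 22 := by positivity
      have h3 : (x - (6 - Real.sqrt 2)) * (x - (6 + Real.sqrt 2)) = 0 := by
        rcases mul_eq_zero.mp hp with h | h
        · rcases mul_eq_zero.mp h with h | h <;> nlinarith
        · exact h
      rcases mul_eq_zero.mp h3 with h | h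
      · left; linarith
      · right; linarith
    · rintro (rfl | rfl)
      · exact ⟨by linarith, by rw [key]; ring⟩
      · exact ⟨by linarith, by rw [key]; ring⟩
  · have hs5 : Real.sqrt 5 ^ 2 = 5 := Real.sq_sqrt (by norm_num)
    have hs5lt : Real.sqrt 5 < 3 := by nlinarith [Real.sqrt_nonneg 5, hs5]
    have hs5nn : 0 ≤ Real.sqrt 5 := Real.sqrt_nonneg 5
    have h80 : Real.sqrt 80 = 4 * Real.sqrt 5 := by
      rw [show (80:ℝ) = 4^2 * 5 by norm_num, Real.sqrt_mul (by positivity),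
        Real.sqrt_sq (by norm_num)]
    rw [h80]
    have hnn : 0 ≤ (1 + Real.sqrt 5) * Real.sqrt (5 - Real.sqrt 5) :=
      mul_nonneg (by linarith) (Real.sqrt_nonneg _)
    rw [show (20 : ℝ) + 4 * Real.sqrt 5 =
        ((1 + Real.sqrt 5) * Real.sqrt (5 - Real.sqrt 5))^2 by
      rw [mul_pow, Real.sq_sqrt (by linarith)]; nlinarith,
      Real.sqrt_sq hnn]
end

section
/- In ℤ[X] one has the factorization Z^5 − 8Z^4 − 118Z^3 + 764Z^2 − 5355Z + 36540 = (Z + 12)(Z^2 + 35)(Z^2 − 20Z + 87); the largest positive real root of z^5 − 8z^4 − 118z^3 + 764z^2 − 5355z + 36540 is 10 + √13. Moreover (5 + √13/2)·√(2/11) = 2·(√(1 + 3/22) + √(13/88)). -/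
open Polynomial

theorem stmt_6 :
    ((X^5 - 8*X^4 - 118*X^3 + 764*X^2 - 5355*X + 36540 : ℤ[X]) =
      (X + 12) * (X^2 + 35) * (X^2 - 20*X + 87)) ∧
    (0 < 10 + Real.sqrt 13 ∧
      (10 + Real.sqrt 13)^5 - 8*(10 + Real.sqrt 13)^4 - 118*(10 + Real.sqrt 13)^3
        + 764*(10 + Real.sqrt 13)^2 - 5355*(10 + Real.sqrt 13) + 36540 = 0 ∧
      ∀ z : ℝ, 0 < z →
        z^5 - 8*z^4 - 118*z^3 + 764*z^2 - 5355*z + 36540 = 0 →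
        z ≤ 10 + Real.sqrt 13) ∧
    ((5 + Real.sqrt 13 / 2) * Real.sqrt (2/11) =
      2 * (Real.sqrt (1 + 3/22) + Real.sqrt (13/88))) := by
  have hs : Real.sqrt 13 ^ 2 = 13 := Real.sq_sqrt (by norm_num)
  have hsn : 0 ≤ Real.sqrt 13 := Real.sqrt_nonneg 13
  refine ⟨by ring, ⟨by linarith, ?_, ?_⟩, ?_⟩
  · set s := Real.sqrt 13
    linear_combination (s^3 + 42*s^2 + 575*s + 2970) * hs
  · intro z hz hroot
    have hfac : (z + 12) * (z^2 + 35) * (z^2 - 20*z + 87) = 0 := by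
      linear_combination hroot
    have h1 : (0:ℝ) < z + 12 := by linarith
    have h2 : (0:ℝ) < z^2 + 35 := by positivity
    have hq : z^2 - 20*z + 87 = 0 := by
      rcases mul_eq_zero.1 hfac with h | h
      · rcases mul_eq_zero.1 h with h | h
        · linarith
        · linarith
      · exact h
    by_contra hcon
    push_neg at hcon
    nlinarith [hq, hs, hsn]
  · have h1 : (1 + 3/22 : ℝ) = 25/22 := by norm_num
    have hb : Real.sqrt (25/22) = 5/2 * Real.sqrt (2/11) := by
      rw [show (25/22:ℝ) = (5/2)^2 * (2/11) by norm_num,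
        Real.sqrt_mul (by positivity), Real.sqrt_sq (by norm_num)]
    have hc : Real.sqrt (13/88) = Real.sqrt 13 * Real.sqrt (2/11) / 4 := by
      rw [← Real.sqrt_mul (by norm_num)]
      rw [show Real.sqrt (13 * (2/11)) = Real.sqrt (4^2 * (13/88)) by norm_num,
        Real.sqrt_mul (by positivity), Real.sqrt_sq (by norm_num)]
      ring
    rw [h1, hb, hc]
    ring
end

section
/- In ℤ[X] one has the factorization Z^5 + 2Z^4 − 318Z^3 + 1984Z^2 − 12355Z + 66990 = (Z + 22)(Z^2 + 35)(Z^2 − 20Z + 87); the set of positive real roots of z^5 + 2z^4 − 318z^3 + 1984z^2 − 12355z + 66990 is exactly {10 − √13, 10 + √13}, whose sum is 20. Moreover 10/√(7 + 4√2) = √((700 − 400√2)/17) = √((700 − √320000)/17). -/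
open Polynomial

theorem stmt_8 :
    ((X^5 + 2*X^4 - 318*X^3 + 1984*X^2 - 12355*X + 66990 : ℤ[X]) =
      (X + 22) * (X^2 + 35) * (X^2 - 20*X + 87)) ∧
    ({z : ℝ | 0 < z ∧ z^5 + 2*z^4 - 318*z^3 + 1984*z^2 - 12355*z + 66990 = 0} =
      {10 - Real.sqrt 13, 10 + Real.sqrt 13}) ∧
    ((10 - Real.sqrt 13) + (10 + Real.sqrt 13) = 20) ∧
    (10 / Real.sqrt (7 + 4*Real.sqrt 2) =
      Real.sqrt ((700 - 400*Real.sqrt 2)/17)) ∧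
    (Real.sqrt ((700 - 400*Real.sqrt 2)/17) =
      Real.sqrt ((700 - Real.sqrt 320000)/17)) := by
  have h13 : Real.sqrt 13 ^ 2 = 13 := Real.sq_sqrt (by norm_num)
  have h13lt : Real.sqrt 13 < 10 := by
    nlinarith [Real.sqrt_nonneg 13]
  have h13pos : (0:ℝ) < Real.sqrt 13 := Real.sqrt_pos.mpr (by norm_num)
  refine ⟨by ring, ?_, by ring, ?_, ?_⟩
  · ext z
    simp only [Set.mem_setOf_eq, Set.mem_insert_iff, Set.mem_singleton_iff]
    constructor
    · rintro ⟨hz, he⟩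
      have hfac : (z + 22) * (z^2 + 35) * (z^2 - 20*z + 87) = 0 := by nlinarith
      have h1 : z + 22 > 0 := by linarith
      have h2 : z^2 + 35 > 0 := by positivity
      have h3 : z^2 - 20*z + 87 = 0 := by
        rcases mul_eq_zero.mp hfac with h | h
        · rcases mul_eq_zero.mp h with h | h <;> nlinarith
        · exact h
      have : (z - 10)^2 = 13 := by nlinarith
      have habs : |z - 10| = Real.sqrt 13 := by
        rw [← Real.sqrt_sq_eq_abs, this]
      rcases abs_eq (Real.sqrt_nonneg 13) |>.mp habs with h | h
      · right; linarith
      · left; linarith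
    · rintro (rfl | rfl)
      · exact ⟨by linarith, by linear_combination ((10-Real.sqrt 13)+22)*((10-Real.sqrt 13)^2+35)*h13⟩
      · exact ⟨by linarith, by linear_combination ((10+Real.sqrt 13)+22)*((10+Real.sqrt 13)^2+35)*h13⟩
  · have h2' : Real.sqrt 2 ^ 2 = 2 := Real.sq_sqrt (by norm_num)
    have h2pos : (0:ℝ) < Real.sqrt 2 := Real.sqrt_pos.mpr (by norm_num)
    have h2lt : Real.sqrt 2 < 3/2 := by nlinarith
    have hden : (0:ℝ) < 7 + 4*Real.sqrt 2 := by positivity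
    have h100 : (10:ℝ) = Real.sqrt 100 := by
      rw [show (100:ℝ) = 10^2 by norm_num, Real.sqrt_sq (by norm_num : (0:ℝ) ≤ 10)]
    rw [show (700 - 400*Real.sqrt 2)/17 = 100 / (7 + 4*Real.sqrt 2) by
      rw [div_eq_div_iff (by norm_num) hden.ne']; nlinarith,
      Real.sqrt_div (by norm_num : (0:ℝ) ≤ 100), ← h100]
  · congr 1
    rw [show (320000:ℝ) = 400^2*2 by norm_num, Real.sqrt_mul (by positivity),
      Real.sqrt_sq (by norm_num)]
end

section
/- In ℤ[X] one has the factorization Z^5 + 6Z^4 − 398Z^3 + 2472Z^2 − 15155Z + 79170 = (Z + 26)(Z^2 + 35)(Z^2 − 20Z + 87); the set of positive real roots of z^5 + 6z^4 − 398z^3 + 2472z^2 − 15155z + 79170 is exactly {10 − √13, 10 + √13}. Moreover 10·√((37 + 15√5)/2) = √(1850 + √2812500). -/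
open Polynomial

theorem stmt_9 :
    ((X^5 + 6*X^4 - 398*X^3 + 2472*X^2 - 15155*X + 79170 : ℤ[X]) =
      (X + 26) * (X^2 + 35) * (X^2 - 20*X + 87)) ∧
    ({z : ℝ | 0 < z ∧ z^5 + 6*z^4 - 398*z^3 + 2472*z^2 - 15155*z + 79170 = 0} =
      {10 - Real.sqrt 13, 10 + Real.sqrt 13}) ∧
    (10 * Real.sqrt ((37 + 15*Real.sqrt 5)/2) =
      Real.sqrt (1850 + Real.sqrt 2812500)) := by
  have h13 : Real.sqrt 13 ^ 2 = 13 := Real.sq_sqrt (by norm_num)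
  have h13nn : (0:ℝ) ≤ Real.sqrt 13 := Real.sqrt_nonneg _
  have h13lt : Real.sqrt 13 < 10 := by
    nlinarith [h13, h13nn]
  refine ⟨by ring, ?_, ?_⟩
  · ext z
    simp only [Set.mem_setOf_eq, Set.mem_insert_iff, Set.mem_singleton_iff]
    constructor
    · rintro ⟨hz, hpoly⟩
      have hfac : (z + 26) * (z^2 + 35) * ((z - 10)^2 - 13) = 0 := by
        nlinarith [hpoly]
      have h1 : (0:ℝ) < z + 26 := by linarith
      have h2 : (0:ℝ) < z^2 + 35 := by positivity
      have h3 : (z - 10)^2 = 13 := by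
        rcases mul_eq_zero.mp hfac with h | h
        · rcases mul_eq_zero.mp h with h | h <;> nlinarith
        · linarith
      have habs : |z - 10| = Real.sqrt 13 := by
        rw [← Real.sqrt_sq_eq_abs, h3]
      rcases abs_eq h13nn |>.mp habs with h | h
      · right; linarith
      · left; linarith
    · have key : ∀ w : ℝ, w^5 + 6*w^4 - 398*w^3 + 2472*w^2 - 15155*w + 79170
          = (w + 26) * (w^2 + 35) * ((w - 10)^2 - 13) := fun w => by ring
      rintro (rfl | rfl)
      · refine ⟨by linarith, ?_⟩
        rw [key, show (10 - Real.sqrt 13) - 10 = -Real.sqrt 13 by ring, neg_pow,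
          h13]
        ring
      · refine ⟨by linarith, ?_⟩
        rw [key, show (10 + Real.sqrt 13) - 10 = Real.sqrt 13 by ring, h13]
        ring
  · have h5 : Real.sqrt 2812500 = 750 * Real.sqrt 5 := by
      rw [show (2812500:ℝ) = 750^2 * 5 by norm_num,
        Real.sqrt_mul (by positivity), Real.sqrt_sq (by norm_num)]
    rw [h5]
    rw [show (1850 + 750 * Real.sqrt 5 : ℝ) = 100 * ((37 + 15*Real.sqrt 5)/2) by ring,
      Real.sqrt_mul (by norm_num), show Real.sqrt 100 = 10 by
        rw [show (100:ℝ) = 10^2 by norm_num, Real.sqrt_sq (by norm_num)]]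
end

section
/- In ℤ[X] one has the factorization X^5 − X^4 − 42X^3 + 22X^2 − 268X + 1848 = (X + 7)(X^2 + 2X + 12)(X^2 − 10X + 22); the set of positive real roots of x^5 − x^4 − 42x^3 + 22x^2 − 268x + 1848 is exactly {5 − √3, 5 + √3}, whose sum is 10. -/
open Polynomial

theorem stmt_10 :
    ((X^5 - X^4 - 42*X^3 + 22*X^2 - 268*X + 1848 : ℤ[X]) =
      (X + 7) * (X^2 + 2*X + 12) * (X^2 - 10*X + 22)) ∧
    ({x : ℝ | 0 < x ∧ x^5 - x^4 - 42*x^3 + 22*x^2 - 268*x + 1848 = 0} =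
      {5 - Real.sqrt 3, 5 + Real.sqrt 3}) ∧
    ((5 - Real.sqrt 3) + (5 + Real.sqrt 3) = 10) := by
  have h3 : Real.sqrt 3 ^ 2 = 3 := Real.sq_sqrt (by norm_num)
  have h3lt : Real.sqrt 3 < 2 := by
    nlinarith [Real.sqrt_nonneg 3, h3]
  have h3pos : (0:ℝ) < Real.sqrt 3 := Real.sqrt_pos.mpr (by norm_num)
  refine ⟨by ring, ?_, by ring⟩
  ext x
  simp only [Set.mem_setOf_eq, Set.mem_insert_iff, Set.mem_singleton_iff]
  constructor
  · rintro ⟨hx, heq⟩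
    have hfac : (x + 7) * ((x^2 + 2*x + 12) * (x^2 - 10*x + 22)) = 0 := by nlinarith [heq]
    have h1 : x + 7 > 0 := by linarith
    have h2 : x^2 + 2*x + 12 > 0 := by nlinarith [sq_nonneg (x+1)]
    have h4 : x^2 - 10*x + 22 = 0 := by
      rcases mul_eq_zero.mp hfac with h | h
      · linarith
      · rcases mul_eq_zero.mp h with h | h
        · linarith
        · exact h
    have : (x - (5 - Real.sqrt 3)) * (x - (5 + Real.sqrt 3)) = 0 := by nlinarith [h3]
    rcases mul_eq_zero.mp this with h | h
    · left; linarith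
    · right; linarith
  · have key : ∀ y : ℝ, y^2 - 10*y + 22 = 0 →
        y^5 - y^4 - 42*y^3 + 22*y^2 - 268*y + 1848 = 0 := by
      intro y hy
      linear_combination ((y+7)*(y^2+2*y+12)) * hy
    rintro (rfl | rfl) <;> refine ⟨by nlinarith, key _ (by linear_combination h3)⟩
end

section
/- In ℤ[X] one has the factorization X^6 + 11X^5 − 54X^4 − 482X^3 − 4X^2 − 1368X + 22176 = (X + 7)(X + 12)(X^2 + 2X + 12)(X^2 − 10X + 22); the set of positive real roots of x^6 + 11x^5 − 54x^4 − 482x^3 − 4x^2 − 1368x + 22176 is exactly {5 − √3, 5 + √3}, whose difference is 2√3. -/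
open Polynomial

theorem stmt_12 :
    ((X^6 + 11*X^5 - 54*X^4 - 482*X^3 - 4*X^2 - 1368*X + 22176 : ℤ[X]) =
      (X + 7) * (X + 12) * (X^2 + 2*X + 12) * (X^2 - 10*X + 22)) ∧
    ({x : ℝ | 0 < x ∧
        x^6 + 11*x^5 - 54*x^4 - 482*x^3 - 4*x^2 - 1368*x + 22176 = 0} =
      {5 - Real.sqrt 3, 5 + Real.sqrt 3}) ∧
    ((5 + Real.sqrt 3) - (5 - Real.sqrt 3) = 2 * Real.sqrt 3) := by
  have s3 : Real.sqrt 3 ^ 2 = 3 := Real.sq_sqrt (by norm_num)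
  have s3pos : (0:ℝ) < Real.sqrt 3 := Real.sqrt_pos.mpr (by norm_num)
  have s3lt : Real.sqrt 3 < 2 := by nlinarith
  refine ⟨by ring, ?_, by ring⟩
  ext x
  simp only [Set.mem_setOf_eq, Set.mem_insert_iff, Set.mem_singleton_iff]
  constructor
  · rintro ⟨hx, heq⟩
    have hfac : (x+7)*(x+12)*((x+1)^2+11)*((x-5)^2-3) = 0 := by nlinarith [heq]
    have h1 : (0:ℝ) < x + 7 := by linarith
    have h2 : (0:ℝ) < x + 12 := by linarith
    have h3 : (0:ℝ) < (x+1)^2 + 11 := by positivity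
    have h4 : (x-5)^2 - 3 = 0 := by
      rcases mul_eq_zero.mp hfac with h | h
      · rcases mul_eq_zero.mp h with h | h
        · rcases mul_eq_zero.mp h with h | h <;> nlinarith
        · nlinarith
      · exact h
    have h5 : (x - 5 - Real.sqrt 3) * (x - 5 + Real.sqrt 3) = 0 := by nlinarith
    rcases mul_eq_zero.mp h5 with h | h
    · right; linarith
    · left; linarith
  · rintro (rfl | rfl) <;> refine ⟨by nlinarith, ?_⟩ <;>
      · have : ∀ y : ℝ, y^6 + 11*y^5 - 54*y^4 - 482*y^3 - 4*y^2 - 1368*y + 22176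
            = (y+7)*(y+12)*((y+1)^2+11)*((y-5)^2-3) := fun y => by ring
        rw [this, mul_eq_zero]; right; nlinarith
end

section
/- In ℤ[X] one has the factorization Z^6 + 22Z^5 − 326Z^4 − 4584Z^3 + 26309Z^2 − 95038Z + 624416 = (Z + 16)(Z + 26)(Z^2 + 19)(Z^2 − 20Z + 79); the set of positive real roots of z^6 + 22z^5 − 326z^4 − 4584z^3 + 26309z^2 − 95038z + 624416 is exactly {10 − √21, 10 + √21}, whose sum is 20. -/
open Polynomial

theorem stmt_14 :
    ((X^6 + 22*X^5 - 326*X^4 - 4584*X^3 + 26309*X^2 - 95038*X + 624416 : ℤ[X]) =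
      (X + 16) * (X + 26) * (X^2 + 19) * (X^2 - 20*X + 79)) ∧
    ({z : ℝ | 0 < z ∧
        z^6 + 22*z^5 - 326*z^4 - 4584*z^3 + 26309*z^2 - 95038*z + 624416 = 0} =
      {10 - Real.sqrt 21, 10 + Real.sqrt 21}) ∧
    ((10 - Real.sqrt 21) + (10 + Real.sqrt 21) = 20) := by
  have hs : Real.sqrt 21 ^ 2 = 21 := Real.sq_sqrt (by norm_num)
  have hlt : Real.sqrt 21 < 10 := by
    nlinarith [Real.sqrt_nonneg 21]
  refine ⟨by ring, ?_, by ring⟩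
  ext z
  simp only [Set.mem_setOf_eq, Set.mem_insert_iff, Set.mem_singleton_iff]
  constructor
  · rintro ⟨hz, h⟩
    have hfac : (z+16)*(z+26)*(z^2+19)*(z^2-20*z+79) = 0 := by nlinarith [h]
    have hq : z^2 - 20*z + 79 = 0 := by
      rcases mul_eq_zero.1 hfac with h1 | h2
      · rcases mul_eq_zero.1 h1 with h3 | h4
        · rcases mul_eq_zero.1 h3 with h5 | h6 <;> nlinarith
        · nlinarith [sq_nonneg z]
      · exact h2
    have : (z - (10 - Real.sqrt 21)) * (z - (10 + Real.sqrt 21)) = 0 := by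
      nlinarith [hq, hs]
    rcases mul_eq_zero.1 this with h | h
    · left; linarith
    · right; linarith
  · have key : ∀ z : ℝ, z^2 - 20*z + 79 = 0 →
        z^6 + 22*z^5 - 326*z^4 - 4584*z^3 + 26309*z^2 - 95038*z + 624416 = 0 := by
      intro z hq
      linear_combination ((z+16)*(z+26)*(z^2+19)) * hq
    rintro (rfl | rfl)
    · exact ⟨by linarith, key _ (by nlinarith [hs])⟩
    · exact ⟨by nlinarith [Real.sqrt_nonneg 21], key _ (by nlinarith [hs])⟩
end

section
/- Let t = (1/3)·(1 + (19 − 3√33)^{1/3} + (19 + 3√33)^{1/3}). Then 10·√((9 − 3t)/(6 − 3t)) = √((2666 + 2/3 − (703703703 + 19/27 − √(407407407407407407 + 11/27))^{1/3} − (703703703 + 19/27 + √(407407407407407407 + 11/27))^{1/3}) / (16 + 2/3 − (703 + 19/27 − √(407407 + 11/27))^{1/3} − (703 + 19/27 + √(407407 + 11/27))^{1/3})). -/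
private lemma cube_root_mul (c x : ℝ) (hc : 0 ≤ c) (hx : 0 ≤ x) :
    (c^3 * x) ^ ((1:ℝ)/3) = c * x ^ ((1:ℝ)/3) := by
  rw [Real.mul_rpow (by positivity) hx, ← Real.rpow_natCast c 3,
    ← Real.rpow_mul hc]
  norm_num

theorem stmt_15 (t : ℝ)
    (ht : t = (1/3) * (1 + (19 - 3*Real.sqrt 33) ^ ((1:ℝ)/3)
      + (19 + 3*Real.sqrt 33) ^ ((1:ℝ)/3))) :
    10 * Real.sqrt ((9 - 3*t) / (6 - 3*t)) =
      Real.sqrt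
        ((2666 + 2/3
            - (703703703 + 19/27
                - Real.sqrt (407407407407407407 + 11/27)) ^ ((1:ℝ)/3)
            - (703703703 + 19/27
                + Real.sqrt (407407407407407407 + 11/27)) ^ ((1:ℝ)/3)) /
          (16 + 2/3
            - (703 + 19/27 - Real.sqrt (407407 + 11/27)) ^ ((1:ℝ)/3)
            - (703 + 19/27 + Real.sqrt (407407 + 11/27)) ^ ((1:ℝ)/3))) := by
  have h33 : Real.sqrt 33 ^ 2 = 33 := Real.sq_sqrt (by norm_num)
  have h33nn : 0 ≤ Real.sqrt 33 := Real.sqrt_nonneg 33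
  have h33le : Real.sqrt 33 ≤ 6 := by
    nlinarith [h33, h33nn]
  have hxm : (0:ℝ) ≤ 19 - 3*Real.sqrt 33 := by nlinarith
  have hxp : (0:ℝ) ≤ 19 + 3*Real.sqrt 33 := by nlinarith
  have hs1 : Real.sqrt (407407 + 11/27) = (1000/27) * (3*Real.sqrt 33) := by
    rw [show (407407 + 11/27 : ℝ) = ((1000/27) * (3*Real.sqrt 33))^2 by
      linear_combination (-1000000/81 : ℝ) * h33]
    exact Real.sqrt_sq (by positivity)
  have hs2 : Real.sqrt (407407407407407407 + 11/27)
      = (1000000000/27) * (3*Real.sqrt 33) := by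
    rw [show (407407407407407407 + 11/27 : ℝ)
        = ((1000000000/27) * (3*Real.sqrt 33))^2 by
      linear_combination (-1000000000000000000/81 : ℝ) * h33]
    exact Real.sqrt_sq (by positivity)
  have e1 : (703 + 19/27 - Real.sqrt (407407 + 11/27) : ℝ)
      = (10/3)^3 * (19 - 3*Real.sqrt 33) := by rw [hs1]; ring
  have e2 : (703 + 19/27 + Real.sqrt (407407 + 11/27) : ℝ)
      = (10/3)^3 * (19 + 3*Real.sqrt 33) := by rw [hs1]; ring
  have e3 : (703703703 + 19/27 - Real.sqrt (407407407407407407 + 11/27) : ℝ)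
      = (1000/3)^3 * (19 - 3*Real.sqrt 33) := by rw [hs2]; ring
  have e4 : (703703703 + 19/27 + Real.sqrt (407407407407407407 + 11/27) : ℝ)
      = (1000/3)^3 * (19 + 3*Real.sqrt 33) := by rw [hs2]; ring
  rw [e1, e2, e3, e4,
    cube_root_mul _ _ (by norm_num) hxm, cube_root_mul _ _ (by norm_num) hxp,
    cube_root_mul _ _ (by norm_num) hxm, cube_root_mul _ _ (by norm_num) hxp]
  set a := (19 - 3*Real.sqrt 33) ^ ((1:ℝ)/3) with ha
  set b := (19 + 3*Real.sqrt 33) ^ ((1:ℝ)/3) with hb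
  have key : (2666 + 2/3 - 1000/3 * a - 1000/3 * b) /
      (16 + 2/3 - 10/3 * a - 10/3 * b) = 100 * ((9 - 3*t) / (6 - 3*t)) := by
    subst ht
    rw [show (2666 + 2/3 - 1000/3 * a - 1000/3 * b : ℝ)
        = (10/3) * (100 * (9 - 3*((1/3)*(1+a+b)))) by ring,
      show (16 + 2/3 - 10/3 * a - 10/3 * b : ℝ)
        = (10/3) * (6 - 3*((1/3)*(1+a+b))) by ring,
      mul_div_mul_left _ _ (by norm_num : (10:ℝ)/3 ≠ 0), mul_div_assoc]
  rw [key, Real.sqrt_mul (by norm_num : (0:ℝ) ≤ 100),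
    show Real.sqrt 100 = 10 by
      rw [show (100:ℝ) = 10^2 by norm_num, Real.sqrt_sq (by norm_num)]]
end

section
/- Let t = (1/3)·(1 + (19 − 3√33)^{1/3} + (19 + 3√33)^{1/3}). Then Roth's printed value √((2666 + 2/3 − (703648148 + 4/27 − √(407329221193415637 + 209/243))^{1/3} − (703648148 + 4/27 + √(407329221193415637 + 209/243))^{1/3}) / (16 + 2/3 − (703 + 35/54 − √(407329 + 215/972))^{1/3} − (703 + 35/54 + √(407329 + 215/972))^{1/3})) is strictly less than the exact value 10·√((9 − 3t)/(6 − 3t)); in particular the two values are distinct. -/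
private lemma le_sqrt_of' {a b : ℝ} (hb : 0 ≤ b) (h : b ^ 2 ≤ a) : b ≤ Real.sqrt a := by
  rw [← Real.sqrt_sq hb]; exact Real.sqrt_le_sqrt h

private lemma sqrt_le_of' {a b : ℝ} (hb : 0 ≤ b) (h : a ≤ b ^ 2) : Real.sqrt a ≤ b := by
  calc Real.sqrt a ≤ Real.sqrt (b ^ 2) := Real.sqrt_le_sqrt h
    _ = b := Real.sqrt_sq hb

private lemma cbrt_eq {b : ℝ} (hb : 0 ≤ b) : (b ^ 3) ^ ((1:ℝ)/3) = b := by
  rw [← Real.rpow_natCast b 3, ← Real.rpow_mul hb]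
  norm_num

private lemma le_cbrt_of' {a b : ℝ} (hb : 0 ≤ b) (h : b ^ 3 ≤ a) : b ≤ a ^ ((1:ℝ)/3) := by
  rw [← cbrt_eq hb]
  exact Real.rpow_le_rpow (by positivity) h (by norm_num)

private lemma cbrt_le_of' {a b : ℝ} (ha : 0 ≤ a) (hb : 0 ≤ b) (h : a ≤ b ^ 3) :
    a ^ ((1:ℝ)/3) ≤ b := by
  rw [← cbrt_eq hb]
  exact Real.rpow_le_rpow ha h (by norm_num)

set_option maxHeartbeats 1000000 in
theorem stmt_16 (t : ℝ)
    (ht : t = (1/3) * (1 + (19 - 3*Real.sqrt 33) ^ ((1:ℝ)/3)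
      + (19 + 3*Real.sqrt 33) ^ ((1:ℝ)/3))) :
    Real.sqrt
        ((2666 + 2/3
            - (703648148 + 4/27
                - Real.sqrt (407329221193415637 + 209/243)) ^ ((1:ℝ)/3)
            - (703648148 + 4/27
                + Real.sqrt (407329221193415637 + 209/243)) ^ ((1:ℝ)/3)) /
          (16 + 2/3
            - (703 + 35/54 - Real.sqrt (407329 + 215/972)) ^ ((1:ℝ)/3)
            - (703 + 35/54 + Real.sqrt (407329 + 215/972)) ^ ((1:ℝ)/3))) <
      10 * Real.sqrt ((9 - 3*t) / (6 - 3*t)) := by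
  -- bounds on √33
  have h33lo : (5.744562 : ℝ) ≤ Real.sqrt 33 := le_sqrt_of' (by norm_num) (by norm_num)
  have h33hi : Real.sqrt 33 ≤ (5.744563 : ℝ) := sqrt_le_of' (by norm_num) (by norm_num)
  -- bounds on t
  have hu : (1.208803 : ℝ) ≤ (19 - 3*Real.sqrt 33) ^ ((1:ℝ)/3) := by
    have h : (1.208803 : ℝ)^3 ≤ 19 - 3*(5.744563:ℝ) := by norm_num
    exact le_cbrt_of' (by norm_num) (by linarith)
  have hv : (3.309056 : ℝ) ≤ (19 + 3*Real.sqrt 33) ^ ((1:ℝ)/3) := by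
    have h : (3.309056 : ℝ)^3 ≤ 19 + 3*(5.744562:ℝ) := by norm_num
    exact le_cbrt_of' (by norm_num) (by linarith)
  have huh : (19 - 3*Real.sqrt 33) ^ ((1:ℝ)/3) ≤ (1.21 : ℝ) := by
    have h : 19 - 3*(5.744562:ℝ) ≤ (1.21:ℝ)^3 := by norm_num
    exact cbrt_le_of' (by linarith) (by norm_num) (by linarith)
  have hvh : (19 + 3*Real.sqrt 33) ^ ((1:ℝ)/3) ≤ (3.31 : ℝ) := by
    have h : 19 + 3*(5.744563:ℝ) ≤ (3.31:ℝ)^3 := by norm_num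
    exact cbrt_le_of' (by positivity) (by norm_num) (by linarith)
  have htlo : (1.83928 : ℝ) ≤ t := by rw [ht]; linarith
  have hthi : t ≤ (1.84 : ℝ) := by rw [ht]; linarith
  -- big inner sqrt
  have hs1lo : (638223488.4375 : ℝ) ≤ Real.sqrt (407329221193415637 + 209/243) :=
    le_sqrt_of' (by norm_num) (by norm_num)
  have hs1hi : Real.sqrt (407329221193415637 + 209/243) ≤ (638223488.4376 : ℝ) :=
    sqrt_le_of' (by norm_num) (by norm_num)
  -- cube roots in numerator (lower bounds)
  have hA : (402.9462 : ℝ) ≤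
      (703648148 + 4/27 - Real.sqrt (407329221193415637 + 209/243)) ^ ((1:ℝ)/3) := by
    have h : (402.9462 : ℝ)^3 ≤ 703648148 + 4/27 - (638223488.4376:ℝ) := by norm_num
    exact le_cbrt_of' (by norm_num) (by linarith)
  have hB : (1102.9868 : ℝ) ≤
      (703648148 + 4/27 + Real.sqrt (407329221193415637 + 209/243)) ^ ((1:ℝ)/3) := by
    have h : (1102.9868 : ℝ)^3 ≤ 703648148 + 4/27 + (638223488.4375:ℝ) := by norm_num
    exact le_cbrt_of' (by norm_num) (by linarith)
  -- small inner sqrt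
  have hs2lo : (638.223488 : ℝ) ≤ Real.sqrt (407329 + 215/972) :=
    le_sqrt_of' (by norm_num) (by norm_num)
  have hs2hi : Real.sqrt (407329 + 215/972) ≤ (638.223489 : ℝ) :=
    sqrt_le_of' (by norm_num) (by norm_num)
  -- cube roots in denominator (upper bounds)
  have hAp : (703 + 35/54 - Real.sqrt (407329 + 215/972)) ^ ((1:ℝ)/3) ≤ (4.029463 : ℝ) := by
    have h : 703 + 35/54 - (638.223488:ℝ) ≤ (4.029463:ℝ)^3 := by norm_num
    have h0 : (703 + 35/54 : ℝ) - 638.223489 ≥ 0 := by norm_num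
    exact cbrt_le_of' (by linarith) (by norm_num) (by linarith)
  have hBp : (703 + 35/54 + Real.sqrt (407329 + 215/972)) ^ ((1:ℝ)/3) ≤ (11.029869 : ℝ) := by
    have h : 703 + 35/54 + (638.223489:ℝ) ≤ (11.029869:ℝ)^3 := by norm_num
    exact cbrt_le_of' (by positivity) (by norm_num) (by linarith)
  -- denominator positive and bounded below
  have hDlo : (1.607334 : ℝ) ≤
      (16 + 2/3
        - (703 + 35/54 - Real.sqrt (407329 + 215/972)) ^ ((1:ℝ)/3)
        - (703 + 35/54 + Real.sqrt (407329 + 215/972)) ^ ((1:ℝ)/3)) := by linarith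
  have hDpos : (0 : ℝ) <
      (16 + 2/3
        - (703 + 35/54 - Real.sqrt (407329 + 215/972)) ^ ((1:ℝ)/3)
        - (703 + 35/54 + Real.sqrt (407329 + 215/972)) ^ ((1:ℝ)/3)) := by linarith
  -- the LHS fraction is at most 722.154
  have hfrac :
      ((2666 + 2/3
          - (703648148 + 4/27
              - Real.sqrt (407329221193415637 + 209/243)) ^ ((1:ℝ)/3)
          - (703648148 + 4/27
              + Real.sqrt (407329221193415637 + 209/243)) ^ ((1:ℝ)/3)) /
        (16 + 2/3
          - (703 + 35/54 - Real.sqrt (407329 + 215/972)) ^ ((1:ℝ)/3)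
          - (703 + 35/54 + Real.sqrt (407329 + 215/972)) ^ ((1:ℝ)/3))) ≤ (722.154 : ℝ) := by
    rw [div_le_iff₀ hDpos]
    have key := mul_le_mul_of_nonneg_left hDlo (by norm_num : (0:ℝ) ≤ 722.154)
    have key2 : (722.154:ℝ) * 1.607334 ≥ 1160.7337 := by norm_num
    linarith only [hA, hB, key, key2]
  -- the RHS fraction is at least 7.2217
  have hrat : (7.2217 : ℝ) ≤ (9 - 3*t) / (6 - 3*t) := by
    rw [le_div_iff₀ (by linarith only [hthi] : (0:ℝ) < 6 - 3*t)]
    linarith only [htlo]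
  calc Real.sqrt
        ((2666 + 2/3
            - (703648148 + 4/27
                - Real.sqrt (407329221193415637 + 209/243)) ^ ((1:ℝ)/3)
            - (703648148 + 4/27
                + Real.sqrt (407329221193415637 + 209/243)) ^ ((1:ℝ)/3)) /
          (16 + 2/3
            - (703 + 35/54 - Real.sqrt (407329 + 215/972)) ^ ((1:ℝ)/3)
            - (703 + 35/54 + Real.sqrt (407329 + 215/972)) ^ ((1:ℝ)/3)))
      ≤ Real.sqrt 722.154 := Real.sqrt_le_sqrt hfrac
    _ < 10 * Real.sqrt 7.2217 := by
        rw [show (10 : ℝ) * Real.sqrt 7.2217 = Real.sqrt (100 * 7.2217) by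
          rw [Real.sqrt_mul (by norm_num), show Real.sqrt 100 = 10 by
            rw [show (100:ℝ) = 10^2 by norm_num, Real.sqrt_sq (by norm_num)]]]
        exact Real.sqrt_lt_sqrt (by norm_num) (by norm_num)
    _ ≤ 10 * Real.sqrt ((9 - 3*t) / (6 - 3*t)) := by
        have := Real.sqrt_le_sqrt hrat
        linarith
end

section
/- The polynomial x^5 + 22x^4 − 13x^3 − 106x^2 − 1583x − 5185 has exactly one positive real root; equivalently, the polynomial x^6 + 22x^5 − 13x^4 − 106x^3 − 1583x^2 − 5185x has exactly one positive real root. -/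
private lemma proot_gt3 (x : ℝ) (hx : 0 < x)
    (h : x^5 + 22*x^4 - 13*x^3 - 106*x^2 - 1583*x - 5185 = 0) : 3 < x := by
  by_contra hle
  push_neg at hle
  nlinarith [pow_pos hx 5, pow_pos hx 4, pow_pos hx 3, sq_nonneg x,
    pow_le_pow_left₀ hx.le hle 5, pow_le_pow_left₀ hx.le hle 4]

private lemma proot_uniq (x y : ℝ) (hx3 : 3 < x) (hy3 : 3 < y)
    (hx : x^5 + 22*x^4 - 13*x^3 - 106*x^2 - 1583*x - 5185 = 0)
    (hy : y^5 + 22*y^4 - 13*y^3 - 106*y^2 - 1583*y - 5185 = 0) : x = y := by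
  have ha : (0:ℝ) ≤ x - 3 := by linarith
  have hb : (0:ℝ) ≤ y - 3 := by linarith
  set a := x - 3 with hadef
  set b := y - 3 with hbdef
  have hQ : (0:ℝ) < a^4 + a^3*b + a^2*b^2 + a*b^3 + b^4
      + 37*(a^3 + a^2*b + a*b^2 + b^3) + 341*(a^2 + a*b + b^2) + 1235*(a + b) + 211 := by
    nlinarith [pow_nonneg ha 4, pow_nonneg hb 4, mul_nonneg (pow_nonneg ha 3) hb,
      mul_nonneg (pow_nonneg ha 2) (pow_nonneg hb 2), mul_nonneg ha (pow_nonneg hb 3),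
      pow_nonneg ha 3, pow_nonneg hb 3, mul_nonneg (pow_nonneg ha 2) hb,
      mul_nonneg ha (pow_nonneg hb 2), pow_nonneg ha 2, pow_nonneg hb 2, mul_nonneg ha hb]
  have key : (y - x) * (a^4 + a^3*b + a^2*b^2 + a*b^3 + b^4
      + 37*(a^3 + a^2*b + a*b^2 + b^3) + 341*(a^2 + a*b + b^2) + 1235*(a + b) + 211)
      = (y^5 + 22*y^4 - 13*y^3 - 106*y^2 - 1583*y - 5185)
      - (x^5 + 22*x^4 - 13*x^3 - 106*x^2 - 1583*x - 5185) := by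
    rw [hadef, hbdef]; ring
  rw [hx, hy] at key
  rw [sub_zero] at key
  have : y - x = 0 := by
    rcases mul_eq_zero.1 key with h | h
    · exact h
    · exact absurd h (ne_of_gt hQ)
  linarith

private lemma proot_exists : ∃ x : ℝ, 0 < x ∧
    x^5 + 22*x^4 - 13*x^3 - 106*x^2 - 1583*x - 5185 = 0 := by
  have hc : ContinuousOn (fun x : ℝ => x^5 + 22*x^4 - 13*x^3 - 106*x^2 - 1583*x - 5185)
      (Set.Icc 5 6) := (by continuity : Continuous _).continuousOn
  have h0 : (0:ℝ) ∈ Set.Icc ((fun x : ℝ => x^5 + 22*x^4 - 13*x^3 - 106*x^2 - 1583*x - 5185) 5)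
      ((fun x : ℝ => x^5 + 22*x^4 - 13*x^3 - 106*x^2 - 1583*x - 5185) 6) := by
    constructor <;> norm_num
  obtain ⟨x, hxmem, hx⟩ := intermediate_value_Icc (by norm_num : (5:ℝ) ≤ 6) hc h0
  exact ⟨x, lt_of_lt_of_le (by norm_num) hxmem.1, hx⟩

theorem stmt_17 :
    (∃! x : ℝ, 0 < x ∧
      x^5 + 22*x^4 - 13*x^3 - 106*x^2 - 1583*x - 5185 = 0) ∧
    (∃! x : ℝ, 0 < x ∧
      x^6 + 22*x^5 - 13*x^4 - 106*x^3 - 1583*x^2 - 5185*x = 0) := by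
  obtain ⟨x, hx0, hx⟩ := proot_exists
  constructor
  · refine ⟨x, ⟨hx0, hx⟩, ?_⟩
    rintro y ⟨hy0, hy⟩
    exact proot_uniq y x (proot_gt3 y hy0 hy) (proot_gt3 x hx0 hx) hy hx
  · refine ⟨x, ⟨hx0, ?_⟩, ?_⟩
    · nlinarith [hx]
    · rintro y ⟨hy0, hy⟩
      have hy' : y^5 + 22*y^4 - 13*y^3 - 106*y^2 - 1583*y - 5185 = 0 := by
        have := hy
        field_simp at this ⊢
        nlinarith [this, hy0]
      exact proot_uniq y x (proot_gt3 y hy0 hy') (proot_gt3 x hx0 hx) hy' hx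
end

section
/- In ℤ[X] one has the factorization X^6 + 27X^5 − 113X^4 − 669X^3 + 463X^2 − 4245X + 22950 = (X + 5)(X + 30)(X^2 + X + 9)(X^2 − 9X + 17); the set of positive real roots of x^6 + 27x^5 − 113x^4 − 669x^3 + 463x^2 − 4245x + 22950 is exactly {(9 − √13)/2, (9 + √13)/2}, whose sum is 9. Moreover (567 + √131220)/81 = 7 + 2√5. -/
open Polynomial

theorem stmt_18 :
    ((X^6 + 27*X^5 - 113*X^4 - 669*X^3 + 463*X^2 - 4245*X + 22950 : ℤ[X]) =
      (X + 5) * (X + 30) * (X^2 + X + 9) * (X^2 - 9*X + 17)) ∧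
    ({x : ℝ | 0 < x ∧
        x^6 + 27*x^5 - 113*x^4 - 669*x^3 + 463*x^2 - 4245*x + 22950 = 0} =
      {(9 - Real.sqrt 13)/2, (9 + Real.sqrt 13)/2}) ∧
    ((9 - Real.sqrt 13)/2 + (9 + Real.sqrt 13)/2 = 9) ∧
    ((567 + Real.sqrt 131220) / 81 = 7 + 2*Real.sqrt 5) := by
  have s13 : Real.sqrt 13 ^ 2 = 13 := Real.sq_sqrt (by norm_num)
  have s13nn : (0:ℝ) ≤ Real.sqrt 13 := Real.sqrt_nonneg 13
  have s13lt : Real.sqrt 13 < 9 := by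
    nlinarith [s13, s13nn]
  refine ⟨by ring, ?_, by ring, ?_⟩
  · ext x
    simp only [Set.mem_setOf_eq, Set.mem_insert_iff, Set.mem_singleton_iff]
    constructor
    · rintro ⟨hx, h⟩
      have hfac : (x+5) * (x+30) * (x^2+x+9) * (x^2-9*x+17) = 0 := by
        nlinarith [h]
      have hq : x^2 - 9*x + 17 = 0 := by
        rcases mul_eq_zero.1 hfac with h1 | h1
        · rcases mul_eq_zero.1 h1 with h2 | h2
          · rcases mul_eq_zero.1 h2 with h3 | h3 <;> nlinarith
          · nlinarith
        · exact h1
      have : (2*x - 9 - Real.sqrt 13) * (2*x - 9 + Real.sqrt 13) = 0 := by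
        nlinarith [s13, hq]
      rcases mul_eq_zero.1 this with h1 | h1
      · right; linarith
      · left; linarith
    · rintro (rfl | rfl)
      · constructor
        · linarith
        · linear_combination (176985/64 - 9525/16*Real.sqrt 13 + 1603/32*Real.sqrt 13^2
            - 27/16*Real.sqrt 13^3 + 1/64*Real.sqrt 13^4) * s13
      · constructor
        · linarith
        · linear_combination (176985/64 + 9525/16*Real.sqrt 13 + 1603/32*Real.sqrt 13^2
            + 27/16*Real.sqrt 13^3 + 1/64*Real.sqrt 13^4) * s13
  · have : Real.sqrt 131220 = 162 * Real.sqrt 5 := by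
      rw [show (131220:ℝ) = 162^2 * 5 by norm_num,
        Real.sqrt_mul (by positivity), Real.sqrt_sq (by norm_num)]
    rw [this]; ring
end

section
/- In ℤ[X] one has the factorization X^6 + 8X^5 − 56X^4 − 232X^3 + 64X^2 − 1072X + 8415 = (X + 5)(X + 11)(X^2 + X + 9)(X^2 − 9X + 17); the set of positive real roots of x^6 + 8x^5 − 56x^4 − 232x^3 + 64x^2 − 1072x + 8415 is exactly {(9 − √13)/2, (9 + √13)/2}, whose product is 17. Moreover 18^2 · 6 · (3 + √5) = 5832 + √18895680, and with φ = (1 + √5)/2 one has φ/√3 = √(18 + 6√5)/6. -/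
open Polynomial

theorem stmt_19 (φ : ℝ) (hφ : φ = (1 + Real.sqrt 5) / 2) :
    ((X^6 + 8*X^5 - 56*X^4 - 232*X^3 + 64*X^2 - 1072*X + 8415 : ℤ[X]) =
      (X + 5) * (X + 11) * (X^2 + X + 9) * (X^2 - 9*X + 17)) ∧
    ({x : ℝ | 0 < x ∧
        x^6 + 8*x^5 - 56*x^4 - 232*x^3 + 64*x^2 - 1072*x + 8415 = 0} =
      {(9 - Real.sqrt 13)/2, (9 + Real.sqrt 13)/2}) ∧
    ((9 - Real.sqrt 13)/2 * ((9 + Real.sqrt 13)/2) = 17) ∧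
    ((18:ℝ)^2 * 6 * (3 + Real.sqrt 5) = 5832 + Real.sqrt 18895680) ∧
    (φ / Real.sqrt 3 = Real.sqrt (18 + 6*Real.sqrt 5) / 6) := by
  have hs13 : Real.sqrt 13 ^ 2 = 13 := Real.sq_sqrt (by norm_num)
  have hs13n : (0:ℝ) ≤ Real.sqrt 13 := Real.sqrt_nonneg _
  have hs13lt : Real.sqrt 13 < 9 := by
    nlinarith [hs13, hs13n]
  have hs5 : Real.sqrt 5 ^ 2 = 5 := Real.sq_sqrt (by norm_num)
  have hs5n : (0:ℝ) ≤ Real.sqrt 5 := Real.sqrt_nonneg _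
  refine ⟨by ring, ?_, ?_, ?_, ?_⟩
  · ext x
    simp only [Set.mem_setOf_eq, Set.mem_insert_iff, Set.mem_singleton_iff]
    constructor
    · rintro ⟨hx, hroot⟩
      have hq : x^2 - 9*x + 17 = 0 := by
        have hf : (x + 5) * (x + 11) * (x^2 + x + 9) * (x^2 - 9*x + 17) = 0 := by
          nlinarith [hroot]
        have h1 : x + 5 > 0 := by linarith
        have h2 : x + 11 > 0 := by linarith
        have h3 : x^2 + x + 9 > 0 := by nlinarith
        have := mul_eq_zero.mp hf
        rcases this with h | h
        · exfalso; rcases mul_eq_zero.mp h with h | h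
          · rcases mul_eq_zero.mp h with h | h <;> nlinarith
          · nlinarith
        · exact h
      have hfac : (2*x - 9 - Real.sqrt 13) * (2*x - 9 + Real.sqrt 13) = 0 := by
        nlinarith [hq, hs13]
      rcases mul_eq_zero.mp hfac with h | h
      · right; linarith
      · left; linarith
    · have key : ∀ y : ℝ, y^2 - 9*y + 17 = 0 →
          y^6 + 8*y^5 - 56*y^4 - 232*y^3 + 64*y^2 - 1072*y + 8415 = 0 := by
        intro y h
        linear_combination ((y+5)*(y+11)*(y^2+y+9)) * h
      rintro (rfl | rfl)
      · exact ⟨by linarith, key _ (by nlinarith [hs13])⟩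
      · exact ⟨by linarith, key _ (by nlinarith [hs13])⟩
  · nlinarith [hs13]
  · have : Real.sqrt 18895680 = 1944 * Real.sqrt 5 := by
      rw [show (18895680:ℝ) = 1944^2 * 5 by norm_num, Real.sqrt_mul (by positivity),
        Real.sqrt_sq (by norm_num)]
    rw [this]; ring
  · have hs3 : Real.sqrt 3 ^ 2 = 3 := Real.sq_sqrt (by norm_num)
    have hs3p : (0:ℝ) < Real.sqrt 3 := Real.sqrt_pos.mpr (by norm_num)
    have key : Real.sqrt (18 + 6*Real.sqrt 5) = φ * (2 * Real.sqrt 3) := by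
      rw [show (18 + 6*Real.sqrt 5 : ℝ) = (φ * (2 * Real.sqrt 3))^2 by
        subst hφ; nlinarith [hs5, hs3]]
      exact Real.sqrt_sq (by subst hφ; positivity)
    rw [key]
    field_simp
    nlinarith [hs3]
end
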